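/- arXiv:1911.03775 — 2 statements merged into one kernel-verified Lean document; each statement's English description precedes it below -/
import Mathlib

section
/- Let d ≥ 1 and p_1, …, p_d ∈ (0,1), and set μ = p_1 + ⋯ + p_d. In anisotropic oriented Bernoulli percolation on ℤ^d, sup_m 𝔼[W_m²] < ∞ if and only if ∑_{n=1}^∞ a_n < ∞. -/
open MeasureTheory ProbabilityTheory

/-- The `i`-th standard basis vector of `ℤ^d`. -/
def stdBasis (d : ℕ) (i : Fin d) : Fin d → ℤ := fun j => if j = i then 1 else 0

/-- A percolation configuration: each oriented edge `⟨x, x + e i⟩`, encoded as the pair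
`(x, i)`, is either open (`true`) or closed (`false`). -/
abbrev Config (d : ℕ) := ((Fin d → ℤ) × Fin d) → Bool

/-- The position after `j` steps of the oriented path starting at the origin whose
sequence of step directions is `γ`. -/
def pathPos (d : ℕ) {n : ℕ} (γ : Fin n → Fin d) (j : ℕ) : Fin d → ℤ :=
  ∑ t ∈ Finset.univ.filter (fun t : Fin n => (t : ℕ) < j), stdBasis d (γ t)

/-- The oriented path with step directions `γ` starting at the origin is open in the
configuration `ω`: each of its oriented edges is open. -/
def pathOpen (d : ℕ) {n : ℕ} (ω : Config d) (γ : Fin n → Fin d) : Prop :=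
  ∀ j : Fin n, ω (pathPos d γ (j : ℕ), γ j) = true

/-- The open cluster of the origin: all vertices reachable from `0` by an open oriented path. -/
def cluster (d : ℕ) (ω : Config d) : Set (Fin d → ℤ) :=
  {x | ∃ (n : ℕ) (γ : Fin n → Fin d), pathOpen d ω γ ∧ pathPos d γ n = x}

/-- The set of oriented edges used by an oriented path with step directions `γ`. -/
noncomputable def pathEdges (d : ℕ) {n : ℕ} (γ : Fin n → Fin d) :
    Finset ((Fin d → ℤ) × Fin d) :=
  Finset.image (fun j : Fin n => (pathPos d γ (j : ℕ), γ j)) Finset.univ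

/-- `ℙ(γ₁, γ₂ open)`: the product, over the distinct oriented edges used by `γ₁` or `γ₂`,
of the probability `p i` of each edge (an edge in direction `e i` contributes `p i`). -/
noncomputable def pairProb (d : ℕ) (p : Fin d → ℝ) {n : ℕ} (γ₁ γ₂ : Fin n → Fin d) : ℝ :=
  ∏ e ∈ pathEdges d γ₁ ∪ pathEdges d γ₂, p e.2

/-- `a n = μ^{-2n} ∑_{(γ₁,γ₂) ∈ 𝒞_n², f(γ₁)=f(γ₂)} ℙ(γ₁, γ₂ open)`. -/
noncomputable def aSeq (d : ℕ) (p : Fin d → ℝ) (n : ℕ) : ℝ :=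
  (∑ gg ∈ Finset.univ.filter
      (fun gg : (Fin n → Fin d) × (Fin n → Fin d) => pathPos d gg.1 n = pathPos d gg.2 n),
    pairProb d p gg.1 gg.2) / (∑ i, p i) ^ (2 * n)

open Classical in
/-- `b m = μ^{-2m} ∑_{(γ₁,γ₂) ∈ A_m} ℙ(γ₁, γ₂ open)`, where `A_m` is the set of pairs of
paths of length `m` whose intermediate vertices are everywhere distinct and whose final
vertices coincide. -/
noncomputable def bSeq (d : ℕ) (p : Fin d → ℝ) (m : ℕ) : ℝ :=
  (∑ gg ∈ Finset.univ.filter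
      (fun gg : (Fin m → Fin d) × (Fin m → Fin d) =>
        (∀ i ∈ Finset.Ioo 0 m, pathPos d gg.1 i ≠ pathPos d gg.2 i) ∧
          pathPos d gg.1 m = pathPos d gg.2 m),
    pairProb d p gg.1 gg.2) / (∑ i, p i) ^ (2 * m)

/-- `Xcount d n ω` is the number of open oriented paths of length `n` starting at the
origin in the configuration `ω`. -/
noncomputable def Xcount (d n : ℕ) (ω : Config d) : ℕ :=
  Nat.card {γ : Fin n → Fin d // pathOpen d ω γ}

/-!
By independence, `𝔼[X_n²] = ∑_{γ₁,γ₂} ℙ(γ₁, γ₂ open)`. Extend two paths of length `n` by one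
step each: the new edges start at coordinate sum `n`, so neither was used before. Summing over
the two directions multiplies the weight of the pair by `μ²`, plus `σ² = ∑ pᵢ (1 - pᵢ)` when the
endpoints coincide (equal directions then give a single shared edge). Hence
`𝔼[X_{n+1}²] = μ² 𝔼[X_n²] + σ² μ^{2n} a_n`, that is, `𝔼[W_m²] = 1 + (σ²/μ²) ∑_{k<m} a_k`
exactly, and `σ² > 0` because `pᵢ < 1`.
-/

open scoped Finset

lemma sum_sum_ite_mk_eq_mk {ι X : Type*} [Fintype ι] [DecidableEq ι] [DecidableEq X]
    (p : ι → ℝ) (x₁ x₂ : X) :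
    ∑ i, ∑ j, (if ((x₁, i) : X × ι) = (x₂, j) then p i else p i * p j)
      = (∑ i, p i) ^ 2 + if x₁ = x₂ then ∑ i, p i * (1 - p i) else 0 := by
  by_cases h : x₁ = x₂
  · subst h
    simp only [Prod.mk.injEq, true_and, if_true]
    have hsplit : ∀ i j : ι, (if i = j then p i else p i * p j)
        = p i * p j + if i = j then p i * (1 - p i) else 0 := by
      intro i j
      split_ifs with hij
      · rw [hij]; ring
      · ring
    simp [hsplit, Finset.sum_add_distrib, sq, Finset.sum_mul_sum]
  · simp [h, sq, Finset.sum_mul_sum]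

lemma Fintype.sum_pi_fin_succ {α M : Type*} [Fintype α] [AddCommMonoid M] {n : ℕ}
    (f : (Fin (n + 1) → α) → M) :
    ∑ γ, f γ = ∑ γ : Fin n → α, ∑ i, f (Fin.snoc γ i) := by
  rw [← (Fin.snocEquiv fun _ => α).sum_comp, Fintype.sum_prod_type, Finset.sum_comm]
  rfl

section Paths

variable {d : ℕ}

def coordSum (x : Fin d → ℤ) : ℤ := ∑ j, x j

lemma coordSum_pathPos {n : ℕ} (γ : Fin n → Fin d) (j : ℕ) :
    coordSum (pathPos d γ j) = #{t : Fin n | (t : ℕ) < j} := by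
  simp only [coordSum, pathPos, Finset.sum_apply]
  rw [Finset.sum_comm]
  simp [stdBasis]

lemma pathPos_length_notMem_pathEdges {n : ℕ} (γ γ' : Fin n → Fin d) (i : Fin d) :
    (pathPos d γ n, i) ∉ pathEdges d γ' := by
  rintro he
  obtain ⟨t, -, ht⟩ := Finset.mem_image.mp he
  have hlt : #{s : Fin n | (s : ℕ) < t} < n :=
    Finset.card_lt_univ_of_notMem (x := t) (by simp) |>.trans_eq (Finset.card_fin n)
  have hfull : #{s : Fin n | (s : ℕ) < n} = n := by simp
  have hsum := congrArg (coordSum ∘ Prod.fst) ht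
  simp only [Function.comp_apply, coordSum_pathPos, hfull] at hsum
  omega

lemma pathPos_snoc {n : ℕ} (γ : Fin n → Fin d) (i : Fin d) (j : ℕ) :
    pathPos d (Fin.snoc γ i : Fin (n + 1) → Fin d) j
      = pathPos d γ j + if n < j then stdBasis d i else 0 := by
  simp only [pathPos, Finset.sum_filter, Fin.sum_univ_castSucc, Fin.val_castSucc,
    Fin.snoc_castSucc, Fin.val_last, Fin.snoc_last]

lemma pathEdges_snoc {n : ℕ} (γ : Fin n → Fin d) (i : Fin d) :
    pathEdges d (Fin.snoc γ i : Fin (n + 1) → Fin d)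
      = insert (pathPos d γ n, i) (pathEdges d γ) := by
  rw [pathEdges, Fin.univ_castSuccEmb, Finset.cons_eq_insert, Finset.image_insert,
    Finset.map_eq_image, Finset.image_image, pathEdges]
  congr 1
  · simp [pathPos_snoc]
  · refine Finset.image_congr fun t _ => ?_
    simp [pathPos_snoc, t.is_lt.le.not_gt]

end Paths

section PairSums

variable {d : ℕ} (p : Fin d → ℝ)

lemma pairProb_snoc {n : ℕ} (γ₁ γ₂ : Fin n → Fin d) (i j : Fin d) :
    pairProb d p (Fin.snoc γ₁ i) (Fin.snoc γ₂ j)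
      = pairProb d p γ₁ γ₂ *
        if (pathPos d γ₁ n, i) = (pathPos d γ₂ n, j) then p i else p i * p j := by
  set e₁ : (Fin d → ℤ) × Fin d := (pathPos d γ₁ n, i)
  set e₂ : (Fin d → ℤ) × Fin d := (pathPos d γ₂ n, j)
  have h₂ : e₂ ∉ pathEdges d γ₁ ∪ pathEdges d γ₂ := by
    simp [e₂, Finset.mem_union, pathPos_length_notMem_pathEdges]
  have hunion : pathEdges d (Fin.snoc γ₁ i) ∪ pathEdges d (Fin.snoc γ₂ j)
      = insert e₁ (insert e₂ (pathEdges d γ₁ ∪ pathEdges d γ₂)) := by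
    rw [pathEdges_snoc, pathEdges_snoc, Finset.insert_union, Finset.union_insert]
  rw [pairProb, pairProb, hunion]
  split_ifs with h
  · rw [h, Finset.insert_idem, Finset.prod_insert h₂, mul_comm, ← h]
  · have h₁ : e₁ ∉ insert e₂ (pathEdges d γ₁ ∪ pathEdges d γ₂) := by
      simp [e₁, Finset.mem_insert, h, pathPos_length_notMem_pathEdges]
    rw [Finset.prod_insert h₁, Finset.prod_insert h₂]
    ring

noncomputable def pairSum (d : ℕ) (p : Fin d → ℝ) (n : ℕ) : ℝ :=
  ∑ γ₁ : Fin n → Fin d, ∑ γ₂ : Fin n → Fin d, pairProb d p γ₁ γ₂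

noncomputable def meetingPairSum (d : ℕ) (p : Fin d → ℝ) (n : ℕ) : ℝ :=
  ∑ γ₁ : Fin n → Fin d, ∑ γ₂ : Fin n → Fin d,
    if pathPos d γ₁ n = pathPos d γ₂ n then pairProb d p γ₁ γ₂ else 0

lemma aSeq_eq_meetingPairSum_div (n : ℕ) :
    aSeq d p n = meetingPairSum d p n / (∑ i, p i) ^ (2 * n) := by
  rw [aSeq, Finset.sum_filter, Fintype.sum_prod_type, meetingPairSum]

lemma pairSum_zero : pairSum d p 0 = 1 := by
  simp [pairSum, pairProb, pathEdges]

lemma pairSum_succ (n : ℕ) :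
    pairSum d p (n + 1)
      = (∑ i, p i) ^ 2 * pairSum d p n + (∑ i, p i * (1 - p i)) * meetingPairSum d p n := by
  calc pairSum d p (n + 1)
      = ∑ γ₁ : Fin n → Fin d, ∑ γ₂ : Fin n → Fin d, ∑ i, ∑ j,
          pairProb d p (Fin.snoc γ₁ i) (Fin.snoc γ₂ j) := by
        simp only [pairSum, Fintype.sum_pi_fin_succ]
        exact Finset.sum_congr rfl fun γ₁ _ => Finset.sum_comm
    _ = ∑ γ₁ : Fin n → Fin d, ∑ γ₂ : Fin n → Fin d, pairProb d p γ₁ γ₂ * ((∑ i, p i) ^ 2 +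
          if pathPos d γ₁ n = pathPos d γ₂ n then ∑ i, p i * (1 - p i) else 0) := by
        simp only [pairProb_snoc, ← Finset.mul_sum, sum_sum_ite_mk_eq_mk]
    _ = _ := by
        rw [pairSum, meetingPairSum, Finset.mul_sum, Finset.mul_sum, ← Finset.sum_add_distrib]
        refine Finset.sum_congr rfl fun γ₁ _ => ?_
        rw [Finset.mul_sum, Finset.mul_sum, ← Finset.sum_add_distrib]
        refine Finset.sum_congr rfl fun γ₂ _ => ?_
        split_ifs <;> ring

lemma pairSum_div_pow_eq (hμ : 0 < ∑ i, p i) (m : ℕ) :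
    pairSum d p m / (∑ i, p i) ^ (2 * m)
      = 1 + (∑ i, p i * (1 - p i)) / (∑ i, p i) ^ 2 * ∑ k ∈ Finset.range m, aSeq d p k := by
  induction m with
  | zero => simp [pairSum_zero]
  | succ m ih =>
    rw [Finset.sum_range_succ, mul_add (_ / _), ← add_assoc, ← ih, aSeq_eq_meetingPairSum_div,
      pairSum_succ, mul_add 2, pow_add]
    field_simp
    ring

variable {p}

lemma pairProb_nonneg (hp : ∀ i, 0 ≤ p i) {n : ℕ} (γ₁ γ₂ : Fin n → Fin d) :
    0 ≤ pairProb d p γ₁ γ₂ :=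
  Finset.prod_nonneg fun e _ => hp e.2

lemma pairSum_nonneg (hp : ∀ i, 0 ≤ p i) (n : ℕ) : 0 ≤ pairSum d p n :=
  Finset.sum_nonneg fun _ _ => Finset.sum_nonneg fun _ _ => pairProb_nonneg hp _ _

lemma aSeq_nonneg (hp : ∀ i, 0 ≤ p i) (n : ℕ) : 0 ≤ aSeq d p n :=
  div_nonneg (Finset.sum_nonneg fun _ _ => pairProb_nonneg hp _ _)
    (pow_nonneg (Finset.sum_nonneg fun i _ => hp i) _)

end PairSums

section SecondMoment

open scoped ENNReal

variable {d : ℕ}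

lemma pathOpen_iff_forall_mem_pathEdges {n : ℕ} (ω : Config d) (γ : Fin n → Fin d) :
    pathOpen d ω γ ↔ ∀ e ∈ pathEdges d γ, ω e = true := by
  simp [pathOpen, pathEdges]

lemma measurableSet_pathOpen {n : ℕ} (γ : Fin n → Fin d) :
    MeasurableSet {ω : Config d | pathOpen d ω γ} := by
  simp only [pathOpen, Set.ofPred_forall]
  exact .iInter fun j => measurableSet_eq_fun (measurable_pi_apply _) measurable_const

lemma measure_pathOpen_and_pathOpen {p : Fin d → ℝ} (hp : ∀ i, 0 ≤ p i)
    {P : Measure (Config d)} (hindep : iIndepFun (fun e (ω : Config d) => ω e) P)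
    (hmarg : ∀ e : (Fin d → ℤ) × Fin d, P {ω : Config d | ω e = true} = ENNReal.ofReal (p e.2))
    {n : ℕ} (γ₁ γ₂ : Fin n → Fin d) :
    P {ω | pathOpen d ω γ₁ ∧ pathOpen d ω γ₂} = ENNReal.ofReal (pairProb d p γ₁ γ₂) := by
  have hset : {ω : Config d | pathOpen d ω γ₁ ∧ pathOpen d ω γ₂}
      = ⋂ e ∈ pathEdges d γ₁ ∪ pathEdges d γ₂, {ω : Config d | ω e = true} := by
    ext ω
    simp [pathOpen_iff_forall_mem_pathEdges, or_imp, forall_and]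
  rw [hset, hindep.meas_biInter (s := fun e => {ω : Config d | ω e = true})
      fun e _ => ⟨{true}, MeasurableSpace.measurableSet_top, rfl⟩,
    pairProb, ENNReal.ofReal_prod_of_nonneg fun e _ => hp e.2]
  exact Finset.prod_congr rfl fun e _ => hmarg e

lemma Xcount_eq_sum_indicator {n : ℕ} (ω : Config d) :
    (Xcount d n ω : ℝ≥0∞) = ∑ γ : Fin n → Fin d, {ω' | pathOpen d ω' γ}.indicator 1 ω := by
  classical
  rw [Xcount, Nat.card_eq_fintype_card, Fintype.card_subtype, Finset.card_filter]
  push_cast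
  exact Finset.sum_congr rfl fun γ _ => by by_cases h : pathOpen d ω γ <;> simp [h]

lemma lintegral_Xcount_sq {p : Fin d → ℝ} (hp : ∀ i, 0 ≤ p i)
    {P : Measure (Config d)} (hindep : iIndepFun (fun e (ω : Config d) => ω e) P)
    (hmarg : ∀ e : (Fin d → ℤ) × Fin d, P {ω : Config d | ω e = true} = ENNReal.ofReal (p e.2))
    (n : ℕ) :
    ∫⁻ ω, (Xcount d n ω : ℝ≥0∞) ^ 2 ∂P = ENNReal.ofReal (pairSum d p n) := by
  have hsq : ∀ ω, (Xcount d n ω : ℝ≥0∞) ^ 2 = ∑ γ₁ : Fin n → Fin d, ∑ γ₂ : Fin n → Fin d,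
      {ω' | pathOpen d ω' γ₁ ∧ pathOpen d ω' γ₂}.indicator 1 ω := by
    intro ω
    simp only [Xcount_eq_sum_indicator, sq, Finset.sum_mul_sum, Set.ofPred_and,
      Set.inter_indicator_one, Pi.mul_apply]
  have hmeas : ∀ γ₁ γ₂ : Fin n → Fin d,
      MeasurableSet {ω : Config d | pathOpen d ω γ₁ ∧ pathOpen d ω γ₂} := fun γ₁ γ₂ =>
    (measurableSet_pathOpen γ₁).inter (measurableSet_pathOpen γ₂)
  simp_rw [hsq]
  rw [lintegral_finsetSum _ fun γ₁ _ => Finset.measurable_sum _ fun γ₂ _ =>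
    measurable_one.indicator (hmeas γ₁ γ₂)]
  simp_rw [lintegral_finsetSum _ fun γ₂ _ => measurable_one.indicator (hmeas _ γ₂),
    lintegral_indicator_one (hmeas _ _), measure_pathOpen_and_pathOpen hp hindep hmarg]
  rw [pairSum, ENNReal.ofReal_sum_of_nonneg fun γ₁ _ => Finset.sum_nonneg fun γ₂ _ =>
    pairProb_nonneg hp γ₁ γ₂]
  simp_rw [ENNReal.ofReal_sum_of_nonneg fun γ₂ _ => pairProb_nonneg hp _ γ₂]

end SecondMoment

open scoped ENNReal in
lemma lintegral_ofReal_sq_Xcount_div_pow {d : ℕ} {p : Fin d → ℝ} (hp : ∀ i, 0 ≤ p i)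
    (hμ : 0 < ∑ i, p i) {P : Measure (Config d)}
    (hindep : iIndepFun (fun e (ω : Config d) => ω e) P)
    (hmarg : ∀ e : (Fin d → ℤ) × Fin d, P {ω : Config d | ω e = true} = ENNReal.ofReal (p e.2))
    (m : ℕ) :
    ∫⁻ ω, ENNReal.ofReal (((Xcount d m ω : ℝ) / (∑ i, p i) ^ m) ^ 2) ∂P
      = ENNReal.ofReal
          (1 + (∑ i, p i * (1 - p i)) / (∑ i, p i) ^ 2 * ∑ k ∈ Finset.range m, aSeq d p k) := by
  have hnorm : ∀ ω, ENNReal.ofReal (((Xcount d m ω : ℝ) / (∑ i, p i) ^ m) ^ 2)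
      = (Xcount d m ω : ℝ≥0∞) ^ 2 * ENNReal.ofReal (((∑ i, p i) ^ (2 * m))⁻¹) := by
    intro ω
    rw [div_pow, ← pow_mul, mul_comm m, div_eq_mul_inv,
      ENNReal.ofReal_mul (by positivity), ENNReal.ofReal_pow (Nat.cast_nonneg _),
      ENNReal.ofReal_natCast]
  rw [lintegral_congr hnorm, lintegral_mul_const' _ _ ENNReal.ofReal_ne_top,
    lintegral_Xcount_sq hp hindep hmarg, ← ENNReal.ofReal_mul (pairSum_nonneg hp m),
    ← div_eq_mul_inv, pairSum_div_pow_eq p hμ]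

open scoped ENNReal in
lemma iSup_ofReal_one_add_mul_sum_range_lt_top_iff {a : ℕ → ℝ} (ha : ∀ n, 0 ≤ a n) {c : ℝ}
    (hc : 0 < c) :
    (⨆ m : ℕ, ENNReal.ofReal (1 + c * ∑ k ∈ Finset.range m, a k)) < ⊤ ↔
      (∑' n : ℕ, ENNReal.ofReal (a (n + 1))) < ⊤ := by
  have hsup : (⨆ m : ℕ, ENNReal.ofReal (1 + c * ∑ k ∈ Finset.range m, a k))
      = 1 + ENNReal.ofReal c * ∑' n, ENNReal.ofReal (a n) := by
    simp_rw [ENNReal.ofReal_add zero_le_one (mul_nonneg hc.le (Finset.sum_nonneg fun k _ => ha k)),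
      ENNReal.ofReal_one, ENNReal.ofReal_mul hc.le,
      ENNReal.ofReal_sum_of_nonneg fun k _ => ha k]
    rw [← ENNReal.add_iSup, ← ENNReal.mul_iSup, ENNReal.tsum_eq_iSup_nat]
  rw [hsup, tsum_eq_zero_add' ENNReal.summable]
  have hc' : ENNReal.ofReal c ≠ 0 := (ENNReal.ofReal_pos.mpr hc).ne'
  simp [lt_top_iff_ne_top, ENNReal.mul_eq_top, hc']

theorem second_moment_bounded_iff_aSeq_summable_general
    (d : ℕ) (hd : 1 ≤ d)
    (p : Fin d → ℝ) (hp : ∀ i, p i ∈ Set.Ioo (0 : ℝ) 1)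
    (μ : ℝ) (hμ : μ = ∑ i, p i)
    (P : Measure (Config d))
    (hindep : iIndepFun (fun e (ω : Config d) => ω e) P)
    (hmarg : ∀ e : (Fin d → ℤ) × Fin d, P {ω : Config d | ω e = true} = ENNReal.ofReal (p e.2))
    (W : ℕ → Config d → ℝ) (hW : ∀ n ω, W n ω = (Xcount d n ω : ℝ) / μ ^ n) :
    (⨆ m : ℕ, ∫⁻ ω, ENNReal.ofReal ((W m ω) ^ 2) ∂P) < ⊤ ↔
      (∑' n : ℕ, ENNReal.ofReal (aSeq d p (n + 1))) < ⊤ := by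
  subst hμ
  have hp₀ : ∀ i, 0 ≤ p i := fun i => (hp i).1.le
  have hμ : 0 < ∑ i, p i := Finset.sum_pos (fun i _ => (hp i).1) ⟨⟨0, hd⟩, Finset.mem_univ _⟩
  have hσ : 0 < ∑ i, p i * (1 - p i) := Finset.sum_pos
    (fun i _ => mul_pos (hp i).1 (sub_pos.mpr (hp i).2)) ⟨⟨0, hd⟩, Finset.mem_univ _⟩
  simp_rw [hW, lintegral_ofReal_sq_Xcount_div_pow hp₀ hμ hindep hmarg]
  exact iSup_ofReal_one_add_mul_sum_range_lt_top_iff (aSeq_nonneg hp₀)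
    (div_pos hσ (pow_pos hμ 2))

theorem second_moment_bounded_iff_aSeq_summable
    (d : ℕ) (hd : 1 ≤ d)
    (p : Fin d → ℝ) (hp : ∀ i, p i ∈ Set.Ioo (0 : ℝ) 1)
    (μ : ℝ) (hμ : μ = ∑ i, p i)
    (P : Measure (Config d)) [IsProbabilityMeasure P]
    (hindep : iIndepFun (fun e (ω : Config d) => ω e) P)
    (hmarg : ∀ e : (Fin d → ℤ) × Fin d, P {ω : Config d | ω e = true} = ENNReal.ofReal (p e.2))
    (W : ℕ → Config d → ℝ) (hW : ∀ n ω, W n ω = (Xcount d n ω : ℝ) / μ ^ n) :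
    (⨆ m : ℕ, ∫⁻ ω, ENNReal.ofReal ((W m ω) ^ 2) ∂P) < ⊤ ↔
      (∑' n : ℕ, ENNReal.ofReal (aSeq d p (n + 1))) < ⊤ :=
  second_moment_bounded_iff_aSeq_summable_general d hd p hp μ hμ P hindep hmarg W hW
end

section
/- Let d ≥ 1 and p_1, …, p_d ∈ (0,1), set μ = p_1 + ⋯ + p_d, and let S¹, S² be two independent oriented random walks associated to the positive vector p = (p_1, …, p_d), with first meeting time τ = inf{n ≥ 1 : S¹_n = S²_n}. Then ∑_{m=1}^∞ b_m < 1 if and only if ∑_{m=2}^∞ ℚ(τ = m) < 1 − 1/μ. -/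
open MeasureTheory ProbabilityTheory

/-- The position at time `n` of the `i`-th walk, given the family of steps `ξ`:
`S^i_n = ξ^i_1 + ⋯ + ξ^i_n`. -/
def walkSum {Ω : Type*} {k : ℕ} (ξ : Fin 2 × ℕ → Ω → (Fin k → ℤ)) (i : Fin 2)
    (n : ℕ) (ω : Ω) : Fin k → ℤ :=
  ∑ t ∈ Finset.range n, ξ (i, t) ω

/-- The event that the two walks are at the same place at time `n`. -/
def meetEvent {Ω : Type*} {k : ℕ} (ξ : Fin 2 × ℕ → Ω → (Fin k → ℤ)) (n : ℕ) : Set Ω :=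
  {ω | walkSum ξ 0 n ω = walkSum ξ 1 n ω}

/-- The event `{τ = n}` where `τ = inf {n ≥ 1 : S¹_n = S²_n}` is the first meeting
time of the two walks. -/
def tauEvent {Ω : Type*} {k : ℕ} (ξ : Fin 2 × ℕ → Ω → (Fin k → ℤ)) (n : ℕ) : Set Ω :=
  {ω | walkSum ξ 0 n ω = walkSum ξ 1 n ω ∧
    ∀ m : ℕ, 0 < m → m < n → walkSum ξ 0 m ω ≠ walkSum ξ 1 m ω}

/-!
Off a null set every step of both walks is a basis vector, so up to time `n` the two walks
follow a unique pair of oriented paths `(γ₁, γ₂)`; by independence this happens with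
probability `μ^{-2n} ∏ p(γ₁) ∏ p(γ₂)`, and `τ = n` exactly when `(γ₁, γ₂) ∈ A_n`. For `n ≥ 2`
two such paths share no edge (a common edge at step `j` gives a common vertex at time `j` or
`j + 1`), so `ℙ(γ₁, γ₂ open)` is the same product and `ℚ(τ = n) = b_n`. Together with
`b_1 = 1/μ` this gives `∑_{m ≥ 1} b_m = 1/μ + ∑_{m ≥ 2} ℚ(τ = m)`.
-/

open Finset

lemma stdBasis_injective (d : ℕ) : Function.Injective (stdBasis d) := by
  intro i j h
  simpa [stdBasis] using congrFun h i

section Paths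

variable {d n : ℕ}

@[simp] lemma pathPos_zero (γ : Fin n → Fin d) : pathPos d γ 0 = 0 := by
  simp [pathPos]

lemma pathPos_succ (γ : Fin n → Fin d) {j : ℕ} (hj : j < n) :
    pathPos d γ (j + 1) = pathPos d γ j + stdBasis d (γ ⟨j, hj⟩) := by
  have : univ.filter (fun t : Fin n => (t : ℕ) < j + 1) =
      insert ⟨j, hj⟩ (univ.filter fun t : Fin n => (t : ℕ) < j) := by
    ext t
    simp only [mem_insert, mem_filter, mem_univ, true_and, Fin.ext_iff]
    omega
  rw [pathPos, this, sum_insert (by simp), add_comm]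
  rfl

lemma pathPos_one (γ : Fin n → Fin d) (hn : 0 < n) : pathPos d γ 1 = stdBasis d (γ ⟨0, hn⟩) := by
  simpa using pathPos_succ γ hn

lemma sum_pathPos (γ : Fin n → Fin d) {j : ℕ} (hj : j ≤ n) : ∑ k, pathPos d γ j k = j := by
  induction j with
  | zero => simp
  | succ j ih =>
    simp [pathPos_succ γ hj, sum_add_distrib, ih (by omega), stdBasis]

lemma eq_of_pathPos_eq {γ₁ γ₂ : Fin n → Fin d} {i j : ℕ} (hi : i ≤ n) (hj : j ≤ n)
    (h : pathPos d γ₁ i = pathPos d γ₂ j) : i = j := by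
  have := congrArg (fun x => ∑ k, x k) h
  simpa [sum_pathPos _ hi, sum_pathPos _ hj] using this

lemma prod_pathEdges (p : Fin d → ℝ) (γ : Fin n → Fin d) :
    ∏ e ∈ pathEdges d γ, p e.2 = ∏ j, p (γ j) :=
  prod_image fun i _ j _ h =>
    Fin.ext (eq_of_pathPos_eq i.isLt.le j.isLt.le (congrArg Prod.fst h))

lemma disjoint_pathEdges {γ₁ γ₂ : Fin n → Fin d} (hn : 2 ≤ n)
    (h : ∀ i ∈ Ioo 0 n, pathPos d γ₁ i ≠ pathPos d γ₂ i) :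
    Disjoint (pathEdges d γ₁) (pathEdges d γ₂) := by
  simp only [pathEdges, disjoint_left, mem_image, mem_univ, true_and]
  rintro _ ⟨i, rfl⟩ ⟨j, hji⟩
  simp only [Prod.mk.injEq] at hji
  obtain ⟨hpos, hdir⟩ := hji
  obtain rfl : j = i := Fin.ext (eq_of_pathPos_eq j.isLt.le i.isLt.le hpos)
  by_cases hi : (j : ℕ) = 0
  · refine h (j + 1) (mem_Ioo.2 ⟨by omega, by omega⟩) ?_
    rw [pathPos_succ γ₁ j.isLt, pathPos_succ γ₂ j.isLt, hpos]
    simp [hdir]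
  · exact h j (mem_Ioo.2 ⟨by omega, j.isLt⟩) hpos.symm

lemma pairProb_eq_of_disjoint (p : Fin d → ℝ) {γ₁ γ₂ : Fin n → Fin d}
    (h : Disjoint (pathEdges d γ₁) (pathEdges d γ₂)) :
    pairProb d p γ₁ γ₂ = (∏ j, p (γ₁ j)) * ∏ j, p (γ₂ j) := by
  rw [pairProb, prod_union h, prod_pathEdges, prod_pathEdges]

end Paths

lemma bSeq_one {d : ℕ} (p : Fin d → ℝ) : bSeq d p 1 = (∑ i, p i)⁻¹ := by
  classical
  have hcond : ∀ γ₁ γ₂ : Fin 1 → Fin d, ((∀ i ∈ Ioo 0 1, pathPos d γ₁ i ≠ pathPos d γ₂ i) ∧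
      pathPos d γ₁ 1 = pathPos d γ₂ 1) ↔ γ₁ = γ₂ := by
    intro γ₁ γ₂
    have : Ioo 0 1 = ∅ := rfl
    simp [this, pathPos_one, (stdBasis_injective d).eq_iff, funext_iff, Fin.forall_fin_one]
  have hdiag : ∀ γ : Fin 1 → Fin d, pairProb d p γ γ = p (γ 0) := by
    intro γ
    rw [pairProb, union_self, prod_pathEdges, Fin.prod_univ_one]
  rw [bSeq, sum_filter, Fintype.sum_prod_type]
  simp only [hcond, sum_ite_eq, mem_univ, if_true, hdiag]
  rw [Fintype.sum_equiv (Equiv.funUnique (Fin 1) (Fin d)) (fun γ => p (γ 0)) p fun _ => rfl,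
    mul_one, pow_two, div_self_mul_self']

lemma ae_exists_eq_of_sum_measure_eq_one {Ω ι β : Type*} [MeasurableSpace Ω] [Fintype ι]
    [MeasurableSpace β] [MeasurableSingletonClass β] {Q : Measure Ω} [IsProbabilityMeasure Q]
    {f : ι → β} (hf : Function.Injective f) {X : Ω → β} (hX : Measurable X)
    (h : ∑ i, Q {ω | X ω = f i} = 1) : ∀ᵐ ω ∂Q, ∃ i, X ω = f i := by
  have hmeas : ∀ i, MeasurableSet {ω | X ω = f i} := fun i => hX (measurableSet_singleton _)
  have hunion : {ω | ∃ i, X ω = f i} = ⋃ i, {ω | X ω = f i} := Set.ofPred_exists _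
  rw [ae_iff_measure_eq (hunion ▸ MeasurableSet.iUnion hmeas).nullMeasurableSet, hunion,
    measure_iUnion (fun i j hij => Set.disjoint_left.2 fun ω hi hj => hij (hf (hi.symm.trans hj)))
      hmeas, tsum_fintype, h, measure_univ]

section Walks

variable {Ω : Type*} {d n : ℕ} (ξ : Fin 2 × ℕ → Ω → (Fin d → ℤ))

def followEvent (γ₁ γ₂ : Fin n → Fin d) : Set Ω :=
  {ω | ∀ t : Fin n, ξ (0, t) ω = stdBasis d (γ₁ t) ∧ ξ (1, t) ω = stdBasis d (γ₂ t)}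

lemma followEvent_eq_iInter (γ₁ γ₂ : Fin n → Fin d) :
    followEvent ξ γ₁ γ₂ =
      ⋂ a : Fin 2 × Fin n, ξ (a.1, a.2) ⁻¹' {stdBasis d (![γ₁, γ₂] a.1 a.2)} := by
  ext ω
  simp [followEvent, Prod.forall, Fin.forall_fin_two, forall_and]

lemma measurableSet_followEvent [MeasurableSpace Ω] (hmeas : ∀ a, Measurable (ξ a))
    (γ₁ γ₂ : Fin n → Fin d) : MeasurableSet (followEvent ξ γ₁ γ₂) := by
  rw [followEvent_eq_iInter]
  exact .iInter fun a => hmeas _ (measurableSet_singleton _)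

lemma measure_followEvent [MeasurableSpace Ω] {Q : Measure Ω} (hindep : iIndepFun ξ Q)
    {q : Fin d → ENNReal} (hlaw : ∀ a i, Q {ω | ξ a ω = stdBasis d i} = q i)
    (γ₁ γ₂ : Fin n → Fin d) :
    Q (followEvent ξ γ₁ γ₂) = (∏ t, q (γ₁ t)) * ∏ t, q (γ₂ t) := by
  have hinj : Function.Injective fun a : Fin 2 × Fin n => (a.1, (a.2 : ℕ)) :=
    fun a b h => Prod.ext (Prod.ext_iff.1 h).1 (Fin.ext (Prod.ext_iff.1 h).2)
  rw [followEvent_eq_iInter,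
    (hindep.precomp hinj).meas_iInter fun a => ⟨_, measurableSet_singleton _, rfl⟩]
  simp only [Set.preimage, Set.mem_singleton_iff, hlaw, Fintype.prod_prod_type, Fin.prod_univ_two]
  rfl

lemma walkSum_eq_pathPos {i : Fin 2} {γ : Fin n → Fin d} {ω : Ω}
    (h : ∀ t : Fin n, ξ (i, t) ω = stdBasis d (γ t)) {m : ℕ} (hm : m ≤ n) :
    walkSum ξ i m ω = pathPos d γ m := by
  induction m with
  | zero => simp [walkSum]
  | succ m ih =>
    rw [walkSum, sum_range_succ, ← walkSum, ih (by omega), h ⟨m, hm⟩, pathPos_succ γ hm]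

lemma mem_tauEvent_iff_of_mem_followEvent {γ₁ γ₂ : Fin n → Fin d} {ω : Ω}
    (hω : ω ∈ followEvent ξ γ₁ γ₂) :
    ω ∈ tauEvent ξ n ↔ (∀ i ∈ Ioo 0 n, pathPos d γ₁ i ≠ pathPos d γ₂ i) ∧
      pathPos d γ₁ n = pathPos d γ₂ n := by
  have hmeet : ∀ m ≤ n, walkSum ξ 0 m ω = walkSum ξ 1 m ω ↔ pathPos d γ₁ m = pathPos d γ₂ m :=
    fun m hm => by
      rw [walkSum_eq_pathPos ξ (fun t => (hω t).1) hm, walkSum_eq_pathPos ξ (fun t => (hω t).2) hm]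
  simp only [tauEvent, Set.mem_ofPred_eq, hmeet n le_rfl, mem_Ioo, and_imp]
  refine and_comm.trans (and_congr_left fun _ => forall₃_congr fun m _ hm => ?_)
  exact not_congr (hmeet m hm.le)

lemma eq_of_mem_followEvent {γ₁ γ₂ δ₁ δ₂ : Fin n → Fin d} {ω : Ω}
    (hγ : ω ∈ followEvent ξ γ₁ γ₂) (hδ : ω ∈ followEvent ξ δ₁ δ₂) : γ₁ = δ₁ ∧ γ₂ = δ₂ :=
  ⟨funext fun t => stdBasis_injective d ((hγ t).1.symm.trans (hδ t).1),
    funext fun t => stdBasis_injective d ((hγ t).2.symm.trans (hδ t).2)⟩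

lemma exists_mem_followEvent {ω : Ω} (h : ∀ a, ∃ i, ξ a ω = stdBasis d i) :
    ∃ γ₁ γ₂ : Fin n → Fin d, ω ∈ followEvent ξ γ₁ γ₂ := by
  choose γ hγ using h
  exact ⟨fun t => γ (0, t), fun t => γ (1, t), fun t => ⟨hγ _, hγ _⟩⟩

open Classical in
lemma tauEvent_ae_eq_biUnion_followEvent [MeasurableSpace Ω] {Q : Measure Ω}
    (hsteps : ∀ᵐ ω ∂Q, ∀ a, ∃ i, ξ a ω = stdBasis d i) :
    tauEvent ξ n =ᵐ[Q] ⋃ gg ∈ univ.filter (fun gg : (Fin n → Fin d) × (Fin n → Fin d) =>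
      (∀ i ∈ Ioo 0 n, pathPos d gg.1 i ≠ pathPos d gg.2 i) ∧
        pathPos d gg.1 n = pathPos d gg.2 n), followEvent ξ gg.1 gg.2 := by
  refine Filter.eventuallyEq_set.2 (hsteps.mono fun ω hω => ?_)
  obtain ⟨γ₁, γ₂, hγ⟩ := exists_mem_followEvent (n := n) ξ hω
  simp only [Set.mem_iUnion, exists_prop, mem_filter, mem_univ, true_and,
    mem_tauEvent_iff_of_mem_followEvent ξ hγ]
  refine ⟨fun h => ⟨(γ₁, γ₂), h, hγ⟩, ?_⟩
  rintro ⟨⟨δ₁, δ₂⟩, hδ, hω'⟩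
  obtain ⟨rfl, rfl⟩ := eq_of_mem_followEvent ξ hω' hγ
  exact hδ

lemma pairwiseDisjoint_followEvent (s : Set ((Fin n → Fin d) × (Fin n → Fin d))) :
    s.PairwiseDisjoint fun gg => followEvent ξ gg.1 gg.2 :=
  fun _ _ _ _ hne => Set.disjoint_left.2 fun _ h h' =>
    hne (Prod.ext_iff.2 (eq_of_mem_followEvent ξ h h'))

end Walks

lemma measure_tauEvent {Ω : Type*} [MeasurableSpace Ω] {Q : Measure Ω} [IsProbabilityMeasure Q]
    {d n : ℕ} {p : Fin d → ℝ} (hp : ∀ i, 0 ≤ p i) (hμ : ∑ i, p i ≠ 0)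
    {ξ : Fin 2 × ℕ → Ω → (Fin d → ℤ)} (hmeas : ∀ a, Measurable (ξ a)) (hindep : iIndepFun ξ Q)
    (hlaw : ∀ a i, Q {ω | ξ a ω = stdBasis d i} = ENNReal.ofReal (p i / ∑ j, p j))
    (hn : 2 ≤ n) :
    Q (tauEvent ξ n) = ENNReal.ofReal (bSeq d p n) := by
  have hμ₀ : 0 ≤ ∑ i, p i := sum_nonneg fun i _ => hp i
  have hpath : ∀ γ : Fin n → Fin d, ∏ t, ENNReal.ofReal (p (γ t) / ∑ i, p i) =
      ENNReal.ofReal ((∏ t, p (γ t)) / (∑ i, p i) ^ n) := fun γ => by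
    rw [← ENNReal.ofReal_prod_of_nonneg fun t _ => div_nonneg (hp _) hμ₀, prod_div_distrib,
      prod_const, card_univ, Fintype.card_fin]
  have hsteps : ∀ᵐ ω ∂Q, ∀ a, ∃ i, ξ a ω = stdBasis d i := by
    refine ae_all_iff.2 fun a => ae_exists_eq_of_sum_measure_eq_one (stdBasis_injective d)
      (hmeas a) ?_
    rw [sum_congr rfl fun i _ => hlaw a i, ← ENNReal.ofReal_sum_of_nonneg, ← sum_div,
      div_self hμ, ENNReal.ofReal_one]
    exact fun i _ => div_nonneg (hp i) hμ₀
  rw [measure_congr (tauEvent_ae_eq_biUnion_followEvent ξ hsteps),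
    measure_biUnion_finset (pairwiseDisjoint_followEvent ξ _) fun gg _ =>
      measurableSet_followEvent ξ hmeas gg.1 gg.2, bSeq, sum_div, ENNReal.ofReal_sum_of_nonneg]
  · refine sum_congr rfl fun gg hgg => ?_
    simp only [mem_filter, mem_univ, true_and] at hgg
    have hnonneg : 0 ≤ (∏ t, p (gg.1 t)) / (∑ i, p i) ^ n :=
      div_nonneg (prod_nonneg fun t _ => hp _) (pow_nonneg hμ₀ n)
    rw [measure_followEvent ξ hindep hlaw, hpath, hpath, ← ENNReal.ofReal_mul hnonneg,
      pairProb_eq_of_disjoint p (disjoint_pathEdges hn hgg.1), div_mul_div_comm, ← pow_add,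
      two_mul]
  · exact fun gg _ => div_nonneg (prod_nonneg fun e _ => hp e.2) (pow_nonneg hμ₀ _)

theorem bSeq_tsum_lt_one_iff_tau
    (d : ℕ) (hd : 1 ≤ d)
    (p : Fin d → ℝ) (hp : ∀ i, p i ∈ Set.Ioo (0 : ℝ) 1)
    (μ : ℝ) (hμ : μ = ∑ i, p i)
    {Ω : Type*} [MeasurableSpace Ω] (Q : Measure Ω) [IsProbabilityMeasure Q]
    (ξ : Fin 2 × ℕ → Ω → (Fin d → ℤ))
    (hmeas : ∀ a, Measurable (ξ a))
    (hindep : iIndepFun ξ Q)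
    (hlaw : ∀ a i, Q {ω | ξ a ω = stdBasis d i} = ENNReal.ofReal (p i / μ)) :
    (∑' m : ℕ, ENNReal.ofReal (bSeq d p (m + 1))) < 1 ↔
      (∑' m : ℕ, Q (tauEvent ξ (m + 2))) < 1 - 1 / ENNReal.ofReal μ := by
  subst hμ
  have hμ : 0 < ∑ i, p i := sum_pos (fun i _ => (hp i).1) ⟨⟨0, hd⟩, mem_univ _⟩
  have hτ : ∀ m, Q (tauEvent ξ (m + 2)) = ENNReal.ofReal (bSeq d p (m + 2)) := fun m =>
    measure_tauEvent (fun i => (hp i).1.le) hμ.ne' hmeas hindep hlaw (by omega)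
  rw [tsum_eq_zero_add' ENNReal.summable, zero_add, bSeq_one, ENNReal.ofReal_inv_of_pos hμ,
    tsum_congr hτ, one_div]
  have hfin : (ENNReal.ofReal (∑ i, p i))⁻¹ ≠ ⊤ :=
    ENNReal.inv_ne_top.2 (ENNReal.ofReal_pos.2 hμ).ne'
  exact (ENNReal.cancel_of_ne hfin).lt_tsub_iff_left.symm
end
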